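/- arXiv:1207.7046 — 2 statements merged into one kernel-verified Lean document; each statement's English description precedes it below -/
import Mathlib

section
/- For λ = 1 − 2/(p−1) and any f = (f₁,f₂) with f₁, f₂ ∈ C^∞[0,1], f₁(0)=0, the pair u defined by u₂(ρ) = (1−ρ²)^{-1}∫_ρ¹ F(s)ds with F(ρ) = f₁(ρ) + ρf₂(ρ) + ∫₀^ρ f₂(s)ds, and u₁(ρ) = ρu₂(ρ) − ∫₀^ρ f₂(s)ds, satisfies u₁, u₂ ∈ C²[0,1], u₁(0)=0, u₂'(0)=0, and solves (λ − L̃₀)u = f, i.e. λu₁ − u₂' + ρu₁' + (2/(p-1))u₁ = f₁ and λu₂ − u₁' + ρu₂' + (2/(p-1))u₂ = f₂. -/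
open Set Filter intervalIntegral
open scoped Topology

theorem aux_hadamard (G : ℝ → ℝ) (hG : ContDiff ℝ 4 G) (hG10 : G 1 = 0) :
    ∃ g : ℝ → ℝ, ContDiffOn ℝ 2 g (Set.Icc 0 1) ∧ ∀ x ∈ Set.Icc (0:ℝ) 1, (x - 1) * g x = G x := by
  -- derivatives of G
  set G1 := deriv G with hG1def
  set G2 := deriv G1 with hG2def
  set G3 := deriv G2 with hG3def
  have hGc1 : ContDiff ℝ 3 G1 := by
    have := (contDiff_succ_iff_deriv.mp (by exact_mod_cast hG : ContDiff ℝ ((3:ℕ) + 1) G)).2.2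
    exact_mod_cast this
  have hGc2 : ContDiff ℝ 2 G2 := by
    have := (contDiff_succ_iff_deriv.mp (by exact_mod_cast hGc1 : ContDiff ℝ ((2:ℕ) + 1) G1)).2.2
    exact_mod_cast this
  have hGc3 : ContDiff ℝ 1 G3 := by
    have := (contDiff_succ_iff_deriv.mp (by exact_mod_cast hGc2 : ContDiff ℝ ((1:ℕ) + 1) G2)).2.2
    exact_mod_cast this
  have hGd : ∀ x, HasDerivAt G (G1 x) x := fun x =>
    ((hG.differentiable (by norm_num)) x).hasDerivAt
  have hG1d : ∀ x, HasDerivAt G1 (G2 x) x := fun x =>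
    ((hGc1.differentiable (by norm_num)) x).hasDerivAt
  have hG2d : ∀ x, HasDerivAt G2 (G3 x) x := fun x =>
    ((hGc2.differentiable (by norm_num)) x).hasDerivAt
  -- quotient functions
  set r : ℝ → ℝ := fun x => G x / (x - 1) with hrdef
  set r1 : ℝ → ℝ := fun x => ((x - 1) * G1 x - G x) / (x - 1) ^ 2 with hr1def
  set r2 : ℝ → ℝ := fun x => ((x - 1) ^ 2 * G2 x - 2 * (x - 1) * G1 x + 2 * G x) / (x - 1) ^ 3
    with hr2def
  set c1 : ℝ := G2 1 / 2 with hc1def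
  set c2 : ℝ := G3 1 / 3 with hc2def
  set g : ℝ → ℝ := fun x => if x = 1 then G1 1 else r x with hgdef
  set φ : ℝ → ℝ := fun x => if x = 1 then c1 else r1 x with hφdef
  set ψ : ℝ → ℝ := fun x => if x = 1 then c2 else r2 x with hψdef
  -- numerator derivative facts (global)
  have hN1 : ∀ x : ℝ, HasDerivAt (fun y => (y - 1) * G1 y - G y) ((x - 1) * G2 x) x := by
    intro x
    have h := (((hasDerivAt_id x).sub_const 1).mul (hG1d x)).sub (hGd x)
    refine h.congr_deriv ?_
    simp only [id_eq]
    ring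
  have hD1 : ∀ x : ℝ, HasDerivAt (fun y : ℝ => (y - 1) ^ 2) (2 * (x - 1)) x := by
    intro x
    have h := ((hasDerivAt_id x).sub_const 1).pow 2
    refine h.congr_deriv ?_
    simp only [id_eq]
    push_cast
    ring
  have hN2 : ∀ x : ℝ,
      HasDerivAt (fun y => (y - 1) ^ 2 * G2 y - 2 * (y - 1) * G1 y + 2 * G y)
        ((x - 1) ^ 2 * G3 x) x := by
    intro x
    have h := (((((hasDerivAt_id x).sub_const 1).pow 2).mul (hG2d x)).sub
      ((((hasDerivAt_id x).sub_const 1).const_mul 2).mul (hG1d x))).add ((hGd x).const_mul 2)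
    refine h.congr_deriv ?_
    simp only [id_eq, Pi.pow_apply]
    push_cast
    ring
  have hD2 : ∀ x : ℝ, HasDerivAt (fun y : ℝ => (y - 1) ^ 3) (3 * (x - 1) ^ 2) x := by
    intro x
    have h := ((hasDerivAt_id x).sub_const 1).pow 3
    refine h.congr_deriv ?_
    simp only [id_eq]
    push_cast
    ring
  have hsub : ∀ x : ℝ, x ≠ 1 → x - 1 ≠ 0 := fun x hx => sub_ne_zero.2 hx
  -- derivative formulas away from 1
  have hr' : ∀ x : ℝ, x ≠ 1 → HasDerivAt r (r1 x) x := by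
    intro x hx
    have h0 := hsub x hx
    have h := (hGd x).div ((hasDerivAt_id x).sub_const 1) h0
    refine h.congr_deriv ?_
    · rw [hr1def]
      simp only [id_eq]
      ring
  have hr1' : ∀ x : ℝ, x ≠ 1 → HasDerivAt r1 (r2 x) x := by
    intro x hx
    have h0 := hsub x hx
    have h := (hN1 x).div (hD1 x) (pow_ne_zero 2 h0)
    refine h.congr_deriv ?_
    rw [hr2def]
    field_simp
    ring
  have hr2c : ∀ x : ℝ, x ≠ 1 → ContinuousAt r2 x := by
    intro x hx
    rw [hr2def]
    exact ContinuousAt.div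
      (((((continuous_id.sub continuous_const).pow 2).mul hGc2.continuous).sub
        ((continuous_const.mul (continuous_id.sub continuous_const)).mul
          hGc1.continuous)).add (continuous_const.mul hG.continuous)).continuousAt
      (((continuous_id.sub continuous_const).pow 3).continuousAt)
      (pow_ne_zero 3 (hsub x hx))
  -- l'Hôpital limits
  have hne : ∀ᶠ x in 𝓝[<] (1:ℝ), x ≠ 1 :=
    eventually_mem_nhdsWithin.mono fun x hx => ne_of_lt hx
  have lim0 : Tendsto r (𝓝[<] 1) (𝓝 (G1 1)) := by
    refine HasDerivAt.lhopital_zero_nhdsLT (f' := G1) (g' := fun _ => (1:ℝ))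
      (Eventually.of_forall fun x => hGd x)
      (Eventually.of_forall fun x => by simpa using (hasDerivAt_id x).sub_const 1)
      (Eventually.of_forall fun _ => one_ne_zero) ?_ ?_ ?_
    · have : Tendsto G (𝓝[<] 1) (𝓝 (G 1)) :=
        (hG.continuous.tendsto 1).mono_left nhdsWithin_le_nhds
      rwa [hG10] at this
    · have : Tendsto (fun x : ℝ => x - 1) (𝓝 1) (𝓝 (1 - 1)) :=
        (continuous_id.sub continuous_const).tendsto 1
      simpa using this.mono_left nhdsWithin_le_nhds
    · simpa using (hGc1.continuous.tendsto 1).mono_left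
        (nhdsWithin_le_nhds : 𝓝[<] (1:ℝ) ≤ 𝓝 1)
  have lim1 : Tendsto r1 (𝓝[<] 1) (𝓝 c1) := by
    refine HasDerivAt.lhopital_zero_nhdsLT (a := (1:ℝ))
      (f' := fun x => (x - 1) * G2 x) (g' := fun x => 2 * (x - 1))
      (Eventually.of_forall hN1) (Eventually.of_forall hD1)
      (hne.mono fun x hx => mul_ne_zero two_ne_zero (hsub x hx)) ?_ ?_ ?_
    · have : Tendsto (fun x => (x - 1) * G1 x - G x) (𝓝 1) (𝓝 ((1 - 1) * G1 1 - G 1)) :=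
        (((continuous_id.sub continuous_const).mul hGc1.continuous).sub hG.continuous).tendsto 1
      rw [hG10] at this
      simpa using this.mono_left nhdsWithin_le_nhds
    · have : Tendsto (fun x : ℝ => (x - 1) ^ 2) (𝓝 1) (𝓝 ((1 - 1) ^ 2)) :=
        ((continuous_id.sub continuous_const).pow 2).tendsto 1
      simpa using this.mono_left nhdsWithin_le_nhds
    · have base : Tendsto (fun x => G2 x / 2) (𝓝[<] (1:ℝ)) (𝓝 c1) := by
        rw [hc1def]
        exact ((hGc2.continuous.tendsto 1).mono_left nhdsWithin_le_nhds).div_const 2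
      refine Tendsto.congr' ?_ base
      filter_upwards [hne] with x hx
      have h0 := hsub x hx
      field_simp
  have lim2 : Tendsto r2 (𝓝[<] 1) (𝓝 c2) := by
    refine HasDerivAt.lhopital_zero_nhdsLT (a := (1:ℝ))
      (f' := fun x => (x - 1) ^ 2 * G3 x) (g' := fun x => 3 * (x - 1) ^ 2)
      (Eventually.of_forall hN2) (Eventually.of_forall hD2)
      (hne.mono fun x hx => mul_ne_zero three_ne_zero (pow_ne_zero 2 (hsub x hx))) ?_ ?_ ?_
    · have : Tendsto (fun x => (x - 1) ^ 2 * G2 x - 2 * (x - 1) * G1 x + 2 * G x) (𝓝 1)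
          (𝓝 ((1 - 1) ^ 2 * G2 1 - 2 * (1 - 1) * G1 1 + 2 * G 1)) :=
        (((((continuous_id.sub continuous_const).pow 2).mul hGc2.continuous).sub
          ((continuous_const.mul (continuous_id.sub continuous_const)).mul
            hGc1.continuous)).add (continuous_const.mul hG.continuous)).tendsto 1
      rw [hG10] at this
      simpa using this.mono_left nhdsWithin_le_nhds
    · have : Tendsto (fun x : ℝ => (x - 1) ^ 3) (𝓝 1) (𝓝 ((1 - 1) ^ 3)) :=
        ((continuous_id.sub continuous_const).pow 3).tendsto 1
      simpa using this.mono_left nhdsWithin_le_nhds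
    · have base : Tendsto (fun x => G3 x / 3) (𝓝[<] (1:ℝ)) (𝓝 c2) := by
        rw [hc2def]
        exact ((hGc3.continuous.tendsto 1).mono_left nhdsWithin_le_nhds).div_const 3
      refine Tendsto.congr' ?_ base
      filter_upwards [hne] with x hx
      have h0 := hsub x hx
      field_simp
  -- eventual equalities near points ≠ 1
  have hgr : ∀ x : ℝ, x ≠ 1 → g =ᶠ[𝓝 x] r := fun x hx =>
    eventually_of_mem (isOpen_ne.mem_nhds hx) fun y hy => by
      rw [hgdef]; exact if_neg hy
  have hφr1 : ∀ x : ℝ, x ≠ 1 → φ =ᶠ[𝓝 x] r1 := fun x hx =>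
    eventually_of_mem (isOpen_ne.mem_nhds hx) fun y hy => by
      rw [hφdef]; exact if_neg hy
  have hψr2 : ∀ x : ℝ, x ≠ 1 → ψ =ᶠ[𝓝 x] r2 := fun x hx =>
    eventually_of_mem (isOpen_ne.mem_nhds hx) fun y hy => by
      rw [hψdef]; exact if_neg hy
  have gdiff : ∀ x : ℝ, x ≠ 1 → DifferentiableAt ℝ g x := fun x hx =>
    ((hgr x hx).differentiableAt_iff).mpr (hr' x hx).differentiableAt
  have gderiv : ∀ x : ℝ, x ≠ 1 → deriv g x = r1 x := fun x hx => by
    rw [(hgr x hx).deriv_eq, (hr' x hx).deriv]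
  have φdiff : ∀ x : ℝ, x ≠ 1 → DifferentiableAt ℝ φ x := fun x hx =>
    ((hφr1 x hx).differentiableAt_iff).mpr (hr1' x hx).differentiableAt
  have φderiv : ∀ x : ℝ, x ≠ 1 → deriv φ x = r2 x := fun x hx => by
    rw [(hφr1 x hx).deriv_eq, (hr1' x hx).deriv]
  have hg1 : g 1 = G1 1 := by rw [hgdef]; simp
  have hφ1 : φ 1 = c1 := by rw [hφdef]; simp
  have hψ1 : ψ 1 = c2 := by rw [hψdef]; simp
  have hrg : r =ᶠ[𝓝[<] (1:ℝ)] g := hne.mono fun x hx => by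
    rw [hgdef]; simp [hx]
  have hr1φ : r1 =ᶠ[𝓝[<] (1:ℝ)] φ := hne.mono fun x hx => by
    rw [hφdef]; simp [hx]
  have hr2ψ : r2 =ᶠ[𝓝[<] (1:ℝ)] ψ := hne.mono fun x hx => by
    rw [hψdef]; simp [hx]
  -- one-sided derivatives at 1
  have gcont : ContinuousWithinAt g (Iio 1) 1 := by
    have h := lim0.congr' hrg
    rw [ContinuousWithinAt, hg1]
    exact h
  have gd1 : HasDerivWithinAt g c1 (Iic 1) 1 := by
    refine hasDerivWithinAt_Iic_of_tendsto_deriv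
      (fun x hx => (gdiff x (ne_of_lt hx)).differentiableWithinAt)
      gcont self_mem_nhdsWithin ?_
    refine lim1.congr' ?_
    filter_upwards [hne] with x hx
    exact (gderiv x hx).symm
  have φcont : ContinuousWithinAt φ (Iio 1) 1 := by
    have h := lim1.congr' hr1φ
    rw [ContinuousWithinAt, hφ1]
    exact h
  have φd1 : HasDerivWithinAt φ c2 (Iic 1) 1 := by
    refine hasDerivWithinAt_Iic_of_tendsto_deriv
      (fun x hx => (φdiff x (ne_of_lt hx)).differentiableWithinAt)
      φcont self_mem_nhdsWithin ?_
    refine lim2.congr' ?_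
    filter_upwards [hne] with x hx
    exact (φderiv x hx).symm
  -- assembly on s = Icc 0 1
  have hsu : UniqueDiffOn ℝ (Icc (0:ℝ) 1) := uniqueDiffOn_Icc (by norm_num)
  have h1s : (1:ℝ) ∈ Icc (0:ℝ) 1 := right_mem_Icc.mpr zero_le_one
  have hgdiffOn : DifferentiableOn ℝ g (Icc 0 1) := by
    intro x hx
    by_cases hx1 : x = 1
    · subst hx1
      exact (gd1.mono Icc_subset_Iic_self).differentiableWithinAt
    · exact (gdiff x hx1).differentiableWithinAt
  have hdw : EqOn (derivWithin g (Icc 0 1)) φ (Icc 0 1) := by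
    intro x hx
    by_cases hx1 : x = 1
    · subst hx1
      rw [(gd1.mono Icc_subset_Iic_self).derivWithin (hsu 1 h1s), hφ1]
    · rw [(gdiff x hx1).derivWithin (hsu x hx), gderiv x hx1, hφdef]
      simp [hx1]
  have hφdiffOn : DifferentiableOn ℝ φ (Icc 0 1) := by
    intro x hx
    by_cases hx1 : x = 1
    · subst hx1
      exact (φd1.mono Icc_subset_Iic_self).differentiableWithinAt
    · exact (φdiff x hx1).differentiableWithinAt
  have hdwφ : EqOn (derivWithin φ (Icc 0 1)) ψ (Icc 0 1) := by
    intro x hx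
    by_cases hx1 : x = 1
    · subst hx1
      rw [(φd1.mono Icc_subset_Iic_self).derivWithin (hsu 1 h1s), hψ1]
    · rw [(φdiff x hx1).derivWithin (hsu x hx), φderiv x hx1, hψdef]
      simp [hx1]
  have ψcont : ContinuousOn ψ (Icc 0 1) := by
    intro x hx
    by_cases hx1 : x = 1
    · subst hx1
      have h0 : ContinuousWithinAt ψ (Iio 1) 1 := by
        have h := lim2.congr' hr2ψ
        rw [ContinuousWithinAt, hψ1]
        exact h
      have h2 : ContinuousWithinAt ψ (Iic 1) 1 := by
        rw [← Set.Iio_insert]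
        exact h0.insert
      exact h2.mono Icc_subset_Iic_self
    · exact ((hr2c x hx1).congr ((hψr2 x hx1).symm)).continuousWithinAt
  refine ⟨g, ?_, ?_⟩
  · rw [show (2 : WithTop ℕ∞) = 1 + 1 from rfl, contDiffOn_succ_iff_derivWithin hsu]
    refine ⟨hgdiffOn, by simp, ?_⟩
    have hφ2 : ContDiffOn ℝ 1 φ (Icc 0 1) := by
      rw [show (1 : WithTop ℕ∞) = 0 + 1 from rfl, contDiffOn_succ_iff_derivWithin hsu]
      refine ⟨hφdiffOn, by simp, ?_⟩
      rw [contDiffOn_zero]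
      exact ψcont.congr hdwφ
    exact hφ2.congr hdw
  · intro x hx
    by_cases hx1 : x = 1
    · subst hx1
      simp [hG10]
    · rw [hgdef]
      simp only [if_neg hx1]
      rw [hrdef]
      field_simp [hsub x hx1]
/-- For `λ = 1 − 2/(p−1)` and any `f = (f₁,f₂)` smooth with `f₁(0)=0`, the pair
`u₂(ρ) = (1−ρ²)⁻¹∫_ρ¹ F(s)ds` with `F(ρ) = f₁(ρ) + ρf₂(ρ) + ∫₀^ρ f₂`, and
`u₁(ρ) = ρu₂(ρ) − ∫₀^ρ f₂`, satisfies `u₁, u₂ ∈ C²[0,1]`, `u₁(0)=0`, `u₂'(0)=0`, and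
solves `(λ − L̃₀)u = f`. -/
theorem range_density_solution
    (p : ℝ) (hp : 3 < p)
    (f₁ f₂ : ℝ → ℝ) (hf₁ : ContDiff ℝ (⊤ : ℕ∞) f₁) (hf₂ : ContDiff ℝ (⊤ : ℕ∞) f₂)
    (hf₁0 : f₁ 0 = 0) :
    ∃ u₁ u₂ : ℝ → ℝ,
      (∀ ρ ∈ Set.Ico (0 : ℝ) 1,
        u₂ ρ = (1 - ρ ^ 2)⁻¹ *
          ∫ s in ρ..1, (f₁ s + s * f₂ s + ∫ t in (0:ℝ)..s, f₂ t)) ∧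
      (∀ ρ ∈ Set.Icc (0 : ℝ) 1, u₁ ρ = ρ * u₂ ρ - ∫ s in (0:ℝ)..ρ, f₂ s) ∧
      ContDiffOn ℝ 2 u₁ (Set.Icc (0 : ℝ) 1) ∧
      ContDiffOn ℝ 2 u₂ (Set.Icc (0 : ℝ) 1) ∧
      u₁ 0 = 0 ∧ derivWithin u₂ (Set.Icc (0 : ℝ) 1) 0 = 0 ∧
      (∀ ρ ∈ Set.Icc (0 : ℝ) 1,
        (1 - 2 / (p - 1)) * u₁ ρ
          - (derivWithin u₂ (Set.Icc (0 : ℝ) 1) ρ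
              - ρ * derivWithin u₁ (Set.Icc (0 : ℝ) 1) ρ - (2 / (p - 1)) * u₁ ρ) = f₁ ρ ∧
        (1 - 2 / (p - 1)) * u₂ ρ
          - (derivWithin u₁ (Set.Icc (0 : ℝ) 1) ρ
              - ρ * derivWithin u₂ (Set.Icc (0 : ℝ) 1) ρ - (2 / (p - 1)) * u₂ ρ) = f₂ ρ) := by
  set q : ℝ → ℝ := fun x => ∫ t in (0:ℝ)..x, f₂ t with hqdef
  have hqd : ∀ x, HasDerivAt q (f₂ x) x := fun x => by
    rw [hqdef]
    exact (hf₂.continuous.integral_hasStrictDerivAt 0 x).hasDerivAt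
  have hqc : ContDiff ℝ 4 q := by
    rw [show (4 : WithTop ℕ∞) = 3 + 1 from rfl, contDiff_succ_iff_deriv]
    refine ⟨fun x => (hqd x).differentiableAt, by simp, ?_⟩
    have hdq : deriv q = f₂ := funext fun x => (hqd x).deriv
    rw [hdq]
    exact hf₂.of_le (WithTop.coe_le_coe.mpr le_top)
  set F : ℝ → ℝ := fun y => f₁ y + y * f₂ y + q y with hFdef
  have hFc : ContDiff ℝ 3 F := by
    rw [hFdef]
    exact ((hf₁.of_le (WithTop.coe_le_coe.mpr le_top)).add (contDiff_id.mul (hf₂.of_le (WithTop.coe_le_coe.mpr le_top)))).add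
      (hqc.of_le (by norm_num))
  set G : ℝ → ℝ := fun x => ∫ s in x..(1:ℝ), F s with hGdef
  have hGd : ∀ x, HasDerivAt G (-(F x)) x := fun x => by
    rw [hGdef]
    exact (intervalIntegral.integral_hasStrictDerivAt_left
      (hFc.continuous.intervalIntegrable x 1)
      (hFc.continuous.stronglyMeasurableAtFilter _ _)
      hFc.continuous.continuousAt).hasDerivAt
  have hGc : ContDiff ℝ 4 G := by
    rw [show (4 : WithTop ℕ∞) = 3 + 1 from rfl, contDiff_succ_iff_deriv]
    refine ⟨fun x => (hGd x).differentiableAt, by simp, ?_⟩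
    have hdG : deriv G = fun x => -(F x) := funext fun x => (hGd x).deriv
    rw [hdG]
    exact hFc.neg
  have hG10 : G 1 = 0 := by rw [hGdef]; simp
  obtain ⟨g, hgc2, hgid⟩ := aux_hadamard G hGc hG10
  set u₂ : ℝ → ℝ := fun x => -(g x) * (1 + x)⁻¹ with hu₂def
  set u₁ : ℝ → ℝ := fun x => x * u₂ x - q x with hu₁def
  have h1x : ∀ x ∈ Set.Icc (0:ℝ) 1, (1:ℝ) + x ≠ 0 := fun x hx => by
    have := hx.1; positivity
  have hu₂c : ContDiffOn ℝ 2 u₂ (Set.Icc 0 1) := by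
    rw [hu₂def]
    exact hgc2.neg.mul ((contDiff_const.add contDiff_id).contDiffOn.inv h1x)
  have hu₁c : ContDiffOn ℝ 2 u₁ (Set.Icc 0 1) := by
    rw [hu₁def]
    exact (contDiffOn_id.mul hu₂c).sub ((hqc.of_le (by norm_num)).contDiffOn)
  have hsu : UniqueDiffOn ℝ (Set.Icc (0:ℝ) 1) := uniqueDiffOn_Icc (by norm_num)
  have hid : ∀ x ∈ Set.Icc (0:ℝ) 1, (1 - x ^ 2) * u₂ x = G x := by
    intro x hx
    have h1 := h1x x hx
    have h2 := hgid x hx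
    rw [hu₂def]
    simp only
    rw [← h2]
    field_simp
    ring
  have hu₂dOn : DifferentiableOn ℝ u₂ (Set.Icc 0 1) := hu₂c.differentiableOn (by norm_num)
  have hD₂ : ∀ ρ ∈ Set.Icc (0:ℝ) 1,
      HasDerivWithinAt u₂ (derivWithin u₂ (Set.Icc 0 1) ρ) (Set.Icc 0 1) ρ :=
    fun ρ hρ => (hu₂dOn ρ hρ).hasDerivWithinAt
  have hB : ∀ ρ ∈ Set.Icc (0:ℝ) 1,
      (1 - ρ ^ 2) * derivWithin u₂ (Set.Icc 0 1) ρ - 2 * ρ * u₂ ρ = -(F ρ) := by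
    intro ρ hρ
    have hpoly : HasDerivWithinAt (fun x : ℝ => 1 - x ^ 2) (-(2 * ρ)) (Set.Icc 0 1) ρ := by
      have h := ((hasDerivAt_const ρ (1:ℝ)).sub
        (hasDerivAt_pow 2 ρ)).hasDerivWithinAt (s := Set.Icc 0 1)
      refine h.congr_deriv ?_
      push_cast
      ring
    have h1 : HasDerivWithinAt (fun x => (1 - x ^ 2) * u₂ x)
        (-(2 * ρ) * u₂ ρ + (1 - ρ ^ 2) * derivWithin u₂ (Set.Icc 0 1) ρ) (Set.Icc 0 1) ρ :=
      hpoly.mul (hD₂ ρ hρ)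
    have h2 : HasDerivWithinAt (fun x => (1 - x ^ 2) * u₂ x) (-(F ρ)) (Set.Icc 0 1) ρ :=
      ((hGd ρ).hasDerivWithinAt).congr (fun y hy => hid y hy) (hid ρ hρ)
    have h3 := (h1.derivWithin (hsu ρ hρ)).symm.trans (h2.derivWithin (hsu ρ hρ))
    linarith [h3]
  have hD₁ : ∀ ρ ∈ Set.Icc (0:ℝ) 1,
      derivWithin u₁ (Set.Icc 0 1) ρ = u₂ ρ + ρ * derivWithin u₂ (Set.Icc 0 1) ρ - f₂ ρ := by
    intro ρ hρ
    have h : HasDerivWithinAt u₁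
        (1 * u₂ ρ + ρ * derivWithin u₂ (Set.Icc 0 1) ρ - f₂ ρ) (Set.Icc 0 1) ρ := by
      rw [hu₁def]
      exact ((hasDerivWithinAt_id ρ _).mul (hD₂ ρ hρ)).sub ((hqd ρ).hasDerivWithinAt)
    rw [h.derivWithin (hsu ρ hρ)]
    ring
  refine ⟨u₁, u₂, ?_, ?_, hu₁c, hu₂c, ?_, ?_, ?_⟩
  · intro ρ hρ
    have hρ' : ρ ∈ Set.Icc (0:ℝ) 1 := Set.Ico_subset_Icc_self hρ
    have h := hid ρ hρ'
    have hρne : (1:ℝ) - ρ ^ 2 ≠ 0 := by nlinarith [hρ.1, hρ.2]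
    have hu : u₂ ρ = (1 - ρ ^ 2)⁻¹ * G ρ := by
      rw [← h]
      field_simp
    rw [hu, hGdef]
  · intro ρ hρ
    simp only [hu₁def, hqdef]
  · simp only [hu₁def, hqdef]
    simp
  · have h := hB 0 (by norm_num)
    have hF0 : F 0 = 0 := by
      simp only [hFdef, hqdef]
      simp [hf₁0]
    rw [hF0] at h
    norm_num at h
    exact h
  · intro ρ hρ
    have hb := hB ρ hρ
    have hd1 := hD₁ ρ hρ
    have hu1 : u₁ ρ = ρ * u₂ ρ - q ρ := by rw [hu₁def]
    have hFρ : F ρ = f₁ ρ + ρ * f₂ ρ + q ρ := by rw [hFdef]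
    constructor
    · rw [hd1, hu1]
      linear_combination (-1 : ℝ) * hb + hFρ
    · rw [hd1]
      ring
end

section
/- Suppose u = (u₁,u₂) solves the eigenvalue equation (λ − L)u = 0 for the linearized operator, i.e. u₂' − ρu₁' − (2/(p-1))u₁ + pκ_p∫₀^ρ u₂ = λu₁ and u₁' − ρu₂' − (2/(p-1))u₂ = λu₂, with u₁(0) = 0. Then u₁(ρ) = ρu₂(ρ) + (λ + (3−p)/(p−1))∫₀^ρ u₂(s)ds, and the function w(ρ) := ∫₀^ρ u₂(s)ds satisfies the second-order ODE (1−ρ²)w'' − (2λ + 4/(p−1))ρw' − [(λ + 2/(p−1))(λ + (3−p)/(p−1)) − pκ_p]w = 0. -/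
/-!
Write `w = ∫₀^ρ u₂` and `α = 2 / (p - 1)`, so that `(3 - p) / (p - 1) = α - 1`. By the second
equation, `u₁ - ρ u₂ - (λ + α - 1) w` has derivative zero, and it vanishes at `0`; this is the first
identity. Adding `ρ` times the second equation to the first and substituting the first identity
eliminates `u₁`, which is the ODE for `w` on `(0, 1)`. At `ρ = 0` the ODE says `w''(0) = 0`, where
`w''(0)` is a two-sided derivative of a function only controlled on `[0, 1)`: if it exists, it is
the right limit of `w'' = u₂'`, which the ODE expresses through `u₂` and `w`, both vanishing in the
limit.
-/

open Set Filter Topology MeasureTheory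

section Calculus

variable {E : Type*} [NormedAddCommGroup E] {a b : ℝ}

theorem intervalIntegrable_of_continuousOn_Ico {u : ℝ → E} (hu : ContinuousOn u (Ico a b))
    {x : ℝ} (hx : x ∈ Ico a b) : IntervalIntegrable u volume a x :=
  (hu.mono (Icc_subset_Ico_right hx.2)).intervalIntegrable_of_Icc hx.1

variable [NormedSpace ℝ E]

theorem constant_of_continuousOn_Ico_of_hasDerivAt_zero {f : ℝ → E}
    (hf : ContinuousOn f (Ico a b)) (hf' : ∀ x ∈ Ioo a b, HasDerivAt f 0 x) :
    ∀ x ∈ Ico a b, f x = f a := by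
  have hright : ∀ y ∈ Ico a b, HasDerivWithinAt f 0 (Ici y) y := by
    intro y hy
    rcases hy.1.eq_or_lt with rfl | hay
    · refine hasDerivWithinAt_Ici_of_tendsto_deriv
        (fun z hz => (hf' z hz).differentiableAt.differentiableWithinAt)
        ((hf a hy).mono Ioo_subset_Ico_self) (Ioo_mem_nhdsGT hy.2) ?_
      refine tendsto_const_nhds.congr' ?_
      filter_upwards [Ioo_mem_nhdsGT hy.2] with z hz using (hf' z hz).deriv.symm
    · exact (hf' y ⟨hay, hy.2⟩).hasDerivWithinAt
  intro x hx
  exact constant_of_has_deriv_right_zero (hf.mono (Icc_subset_Ico_right hx.2))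
    (fun y hy => hright y ⟨hy.1, hy.2.trans hx.2⟩) x (right_mem_Icc.2 hx.1)

theorem eq_of_hasDerivAt_of_tendsto_deriv_nhdsGT {g : ℝ → E} {d L : E} (hg : HasDerivAt g d a)
    (hab : a < b) (hdiff : ∀ x ∈ Ioo a b, DifferentiableAt ℝ g x)
    (hlim : Tendsto (deriv g) (𝓝[>] a) (𝓝 L)) : d = L :=
  (uniqueDiffWithinAt_Ici a).eq_deriv _ hg.hasDerivWithinAt <|
    hasDerivWithinAt_Ici_of_tendsto_deriv (fun x hx => (hdiff x hx).differentiableWithinAt)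
      hg.continuousAt.continuousWithinAt (Ioo_mem_nhdsGT hab) hlim

variable {u : ℝ → E}

theorem continuousOn_primitive_Ico (hu : ContinuousOn u (Ico a b)) :
    ContinuousOn (fun x => ∫ s in a..x, u s) (Ico a b) := by
  intro x hx
  obtain ⟨c, hxc, hcb⟩ := exists_between hx.2
  have hc : c ∈ Ico a b := ⟨hx.1.trans hxc.le, hcb⟩
  have hIcc := intervalIntegral.continuousOn_primitive_interval'
    (intervalIntegrable_of_continuousOn_Ico hu hc) left_mem_uIcc
  rw [uIcc_of_le hc.1] at hIcc
  exact (hIcc x ⟨hx.1, hxc.le⟩).mono_of_mem_nhdsWithin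
    (mem_nhdsWithin.2 ⟨Iio c, isOpen_Iio, hxc, fun y hy => ⟨hy.2.1, le_of_lt hy.1⟩⟩)

theorem hasDerivAt_primitive_Ioo [CompleteSpace E] (hu : ContinuousOn u (Ico a b)) {x : ℝ}
    (hx : x ∈ Ioo a b) : HasDerivAt (fun x => ∫ s in a..x, u s) (u x) x := by
  have hIoo := hu.mono Ioo_subset_Ico_self
  exact intervalIntegral.integral_hasDerivAt_right
    (intervalIntegrable_of_continuousOn_Ico hu ⟨hx.1.le, hx.2⟩)
    (hIoo.stronglyMeasurableAtFilter isOpen_Ioo x hx)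
    (hIoo.continuousAt (Ioo_mem_nhds hx.1 hx.2))

theorem deriv_primitive_eventuallyEq [CompleteSpace E] (hu : ContinuousOn u (Ico a b)) {x : ℝ}
    (hx : x ∈ Ioo a b) : deriv (fun x => ∫ s in a..x, u s) =ᶠ[𝓝 x] u := by
  filter_upwards [Ioo_mem_nhds hx.1 hx.2] with y hy using (hasDerivAt_primitive_Ioo hu hy).deriv

end Calculus

theorem second_order_of_first_order_system {ρ α β lam v₁ v₂ v₁' v₂' w : ℂ}
    (h₁ : v₂' - ρ * v₁' - α * v₁ + β * w = lam * v₁) (h₂ : v₁' - ρ * v₂' - α * v₂ = lam * v₂)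
    (h₃ : v₁ = ρ * v₂ + (lam + α - 1) * w) :
    (1 - ρ ^ 2) * v₂' - (2 * lam + 2 * α) * ρ * v₂ - ((lam + α) * (lam + α - 1) - β) * w = 0 := by
  linear_combination h₁ + ρ * h₂ + (lam + α) * h₃

/-- The eigenvalue equation `(λ - L) u = 0` on `(0, b)`; in the paper `α = 2 / (p - 1)` and
`β = p κ_p`. -/
structure SolvesEigenvalueEquation (α β lam : ℂ) (u₁ u₂ : ℝ → ℂ) (b : ℝ) : Prop where
  continuousOn₁ : ContinuousOn u₁ (Ico 0 b)
  continuousOn₂ : ContinuousOn u₂ (Ico 0 b)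
  differentiableOn₁ : DifferentiableOn ℝ u₁ (Ioo 0 b)
  differentiableOn₂ : DifferentiableOn ℝ u₂ (Ioo 0 b)
  eq₁ : ∀ ρ ∈ Ioo 0 b,
    deriv u₂ ρ - ρ * deriv u₁ ρ - α * u₁ ρ + β * (∫ s in 0..ρ, u₂ s) = lam * u₁ ρ
  eq₂ : ∀ ρ ∈ Ioo 0 b, deriv u₁ ρ - ρ * deriv u₂ ρ - α * u₂ ρ = lam * u₂ ρ

namespace SolvesEigenvalueEquation

variable {α β lam : ℂ} {u₁ u₂ : ℝ → ℂ} {b : ℝ}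

theorem first_integral (hu : SolvesEigenvalueEquation α β lam u₁ u₂ b) (h₀ : u₁ 0 = 0) :
    ∀ ρ ∈ Ico 0 b, u₁ ρ = ρ * u₂ ρ + (lam + α - 1) * ∫ s in 0..ρ, u₂ s := by
  set F : ℝ → ℂ := fun ρ => u₁ ρ - ρ * u₂ ρ - (lam + α - 1) * ∫ s in 0..ρ, u₂ s
  have hFcont : ContinuousOn F (Ico 0 b) :=
    (hu.continuousOn₁.sub (Complex.continuous_ofReal.continuousOn.mul hu.continuousOn₂)).sub
      (continuousOn_const.mul (continuousOn_primitive_Ico hu.continuousOn₂))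
  have hFderiv : ∀ ρ ∈ Ioo 0 b, HasDerivAt F 0 ρ := by
    intro ρ hρ
    have hopen : Ioo 0 b ∈ 𝓝 ρ := Ioo_mem_nhds hρ.1 hρ.2
    have hF := ((hu.differentiableOn₁.differentiableAt hopen).hasDerivAt.sub
      ((hasDerivAt_id ρ).ofReal_comp.mul
        (hu.differentiableOn₂.differentiableAt hopen).hasDerivAt)).sub
      ((hasDerivAt_primitive_Ioo hu.continuousOn₂ hρ).const_mul (lam + α - 1))
    simp only [id_eq, Complex.ofReal_one, one_mul] at hF
    refine hF.congr_deriv ?_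
    linear_combination hu.eq₂ ρ hρ
  intro ρ hρ
  have hconst := constant_of_continuousOn_Ico_of_hasDerivAt_zero hFcont hFderiv ρ hρ
  simp only [F, h₀, Complex.ofReal_zero, zero_mul, intervalIntegral.integral_same, mul_zero,
    sub_zero] at hconst
  linear_combination hconst

theorem ode_Ioo (hu : SolvesEigenvalueEquation α β lam u₁ u₂ b) (h₀ : u₁ 0 = 0) :
    ∀ ρ ∈ Ioo 0 b, (1 - ρ ^ 2) * deriv u₂ ρ - (2 * lam + 2 * α) * ρ * u₂ ρ
      - ((lam + α) * (lam + α - 1) - β) * ∫ s in 0..ρ, u₂ s = 0 := fun ρ hρ =>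
  second_order_of_first_order_system (hu.eq₁ ρ hρ) (hu.eq₂ ρ hρ)
    (hu.first_integral h₀ ρ ⟨hρ.1.le, hρ.2⟩)

theorem deriv_deriv_primitive_zero (hu : SolvesEigenvalueEquation α β lam u₁ u₂ b)
    (h₀ : u₁ 0 = 0) (hb : 0 < b) :
    deriv (fun σ => deriv (fun σ' => ∫ s in 0..σ', u₂ s) σ) 0 = 0 := by
  set W : ℝ → ℂ := fun σ' => ∫ s in 0..σ', u₂ s
  refine (em (DifferentiableAt ℝ (deriv W) 0)).elim (fun hdiff => ?_)
    deriv_zero_of_not_differentiableAt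
  refine eq_of_hasDerivAt_of_tendsto_deriv_nhdsGT hdiff.hasDerivAt hb (fun σ hσ =>
    (hu.differentiableOn₂.differentiableAt (Ioo_mem_nhds hσ.1 hσ.2)).congr_of_eventuallyEq
      (deriv_primitive_eventuallyEq hu.continuousOn₂ hσ)) ?_
  -- `g` is `u₂'` solved from the ODE on `(0, min b 1)`
  set g : ℝ → ℂ := fun σ => ((2 * lam + 2 * α) * σ * u₂ σ
    + ((lam + α) * (lam + α - 1) - β) * W σ) / (1 - (σ : ℂ) ^ 2)
  have hg : ContinuousWithinAt g (Ico 0 b) 0 := by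
    have hσ : Continuous fun σ : ℝ => (σ : ℂ) := Complex.continuous_ofReal
    refine ((continuousWithinAt_const.mul hσ.continuousWithinAt).mul
      (hu.continuousOn₂ 0 ⟨le_rfl, hb⟩) |>.add (continuousWithinAt_const.mul
      (continuousOn_primitive_Ico hu.continuousOn₂ 0 ⟨le_rfl, hb⟩))).div
      (continuousWithinAt_const.sub (hσ.pow 2).continuousWithinAt) (by norm_num)
  have hg₀ : g 0 = 0 := by simp [g, W]
  have hlim : Tendsto g (𝓝[>] 0) (𝓝 0) :=
    hg₀ ▸ (hg.mono_of_mem_nhdsWithin (mem_of_superset (Ioo_mem_nhdsGT hb) Ioo_subset_Ico_self))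
  refine hlim.congr' ?_
  filter_upwards [Ioo_mem_nhdsGT hb, Ioo_mem_nhdsGT one_pos] with σ hσ hσ₁
  have hne : (1 - (σ : ℂ) ^ 2) ≠ 0 := by
    rw [← Complex.ofReal_one, ← Complex.ofReal_pow, ← Complex.ofReal_sub, Complex.ofReal_ne_zero]
    nlinarith [hσ₁.1, hσ₁.2]
  rw [(deriv_primitive_eventuallyEq hu.continuousOn₂ hσ).deriv_eq, div_eq_iff hne]
  linear_combination -hu.ode_Ioo h₀ σ hσ

theorem primitive_ode (hu : SolvesEigenvalueEquation α β lam u₁ u₂ b) (h₀ : u₁ 0 = 0) :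
    ∀ ρ ∈ Ico 0 b, (1 - ρ ^ 2) * deriv (fun σ => deriv (fun σ' => ∫ s in 0..σ', u₂ s) σ) ρ
      - (2 * lam + 2 * α) * ρ * deriv (fun σ' => ∫ s in 0..σ', u₂ s) ρ
      - ((lam + α) * (lam + α - 1) - β) * ∫ s in 0..ρ, u₂ s = 0 := by
  intro ρ hρ
  rcases hρ.1.eq_or_lt with rfl | hρ₀
  · simp [hu.deriv_deriv_primitive_zero h₀ hρ.2]
  · have hρ' : ρ ∈ Ioo 0 b := ⟨hρ₀, hρ.2⟩
    rw [(deriv_primitive_eventuallyEq hu.continuousOn₂ hρ').deriv_eq,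
      (hasDerivAt_primitive_Ioo hu.continuousOn₂ hρ').deriv]
    exact hu.ode_Ioo h₀ ρ hρ'

end SolvesEigenvalueEquation

theorem eigenvalue_equation_reduction_general
    (p κ : ℝ) (hp : 3 < p)
    (lam : ℂ) (u₁ u₂ : ℝ → ℂ)
    (hreg₁ : ContDiffOn ℝ 1 u₁ (Set.Ico (0 : ℝ) 1))
    (hreg₂ : ContDiffOn ℝ 1 u₂ (Set.Ico (0 : ℝ) 1))
    (hu₁0 : u₁ 0 = 0)
    (heq₁ : ∀ ρ ∈ Set.Ico (0 : ℝ) 1,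
      deriv u₂ ρ - (ρ : ℂ) * deriv u₁ ρ - ((2 / (p - 1) : ℝ) : ℂ) * u₁ ρ
        + ((p * κ : ℝ) : ℂ) * ∫ s in (0:ℝ)..ρ, u₂ s = lam * u₁ ρ)
    (heq₂ : ∀ ρ ∈ Set.Ico (0 : ℝ) 1,
      deriv u₁ ρ - (ρ : ℂ) * deriv u₂ ρ - ((2 / (p - 1) : ℝ) : ℂ) * u₂ ρ = lam * u₂ ρ) :
    (∀ ρ ∈ Set.Ico (0 : ℝ) 1,
      u₁ ρ = (ρ : ℂ) * u₂ ρ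
        + (lam + (((3 - p) / (p - 1) : ℝ) : ℂ)) * ∫ s in (0:ℝ)..ρ, u₂ s) ∧
    (∀ ρ ∈ Set.Ico (0 : ℝ) 1,
      ((1 - ρ ^ 2 : ℝ) : ℂ) *
          deriv (fun σ => deriv (fun σ' => ∫ s in (0:ℝ)..σ', u₂ s) σ) ρ
        - (2 * lam + ((4 / (p - 1) : ℝ) : ℂ)) * (ρ : ℂ) *
          deriv (fun σ' => ∫ s in (0:ℝ)..σ', u₂ s) ρ
        - ((lam + ((2 / (p - 1) : ℝ) : ℂ)) * (lam + (((3 - p) / (p - 1) : ℝ) : ℂ))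
            - ((p * κ : ℝ) : ℂ)) * (∫ s in (0:ℝ)..ρ, u₂ s) = 0) := by
  have hu : SolvesEigenvalueEquation ((2 / (p - 1) : ℝ) : ℂ) ((p * κ : ℝ) : ℂ) lam u₁ u₂ 1 :=
    { continuousOn₁ := hreg₁.continuousOn
      continuousOn₂ := hreg₂.continuousOn
      differentiableOn₁ := (hreg₁.differentiableOn one_ne_zero).mono Ioo_subset_Ico_self
      differentiableOn₂ := (hreg₂.differentiableOn one_ne_zero).mono Ioo_subset_Ico_self
      eq₁ := fun ρ hρ => heq₁ ρ (Ioo_subset_Ico_self hρ)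
      eq₂ := fun ρ hρ => heq₂ ρ (Ioo_subset_Ico_self hρ) }
  have hshift : (((3 - p) / (p - 1) : ℝ) : ℂ) = ((2 / (p - 1) : ℝ) : ℂ) - 1 := by
    have : p - 1 ≠ 0 := by linarith
    rw [← Complex.ofReal_one, ← Complex.ofReal_sub]
    congr 1
    field_simp
    ring
  have hdouble : ((4 / (p - 1) : ℝ) : ℂ) = 2 * ((2 / (p - 1) : ℝ) : ℂ) := by push_cast; ring
  refine ⟨fun ρ hρ => ?_, fun ρ hρ => ?_⟩
  · rw [hshift, ← add_sub_assoc]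
    exact hu.first_integral hu₁0 ρ hρ
  · rw [hshift, hdouble, ← add_sub_assoc, Complex.ofReal_sub, Complex.ofReal_one,
      Complex.ofReal_pow]
    exact hu.primitive_ode hu₁0 ρ hρ

/-- If `u = (u₁,u₂)` solves the eigenvalue equation `(λ − L)u = 0`, i.e.
`u₂' − ρu₁' − (2/(p-1))u₁ + pκ_p∫₀^ρ u₂ = λu₁` and `u₁' − ρu₂' − (2/(p-1))u₂ = λu₂`,
with `u₁(0) = 0`, then `u₁(ρ) = ρu₂(ρ) + (λ + (3−p)/(p−1))∫₀^ρ u₂`, and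
`w(ρ) := ∫₀^ρ u₂` satisfies
`(1−ρ²)w'' − (2λ + 4/(p−1))ρw' − [(λ + 2/(p−1))(λ + (3−p)/(p−1)) − pκ_p]w = 0`. -/
theorem eigenvalue_equation_reduction
    (p κ : ℝ) (hp : 3 < p) (hκ : κ = 2 * (p + 1) / (p - 1) ^ 2)
    (lam : ℂ) (u₁ u₂ : ℝ → ℂ)
    (hreg₁ : ContDiffOn ℝ 1 u₁ (Set.Ico (0 : ℝ) 1))
    (hreg₂ : ContDiffOn ℝ 1 u₂ (Set.Ico (0 : ℝ) 1))
    (hu₁0 : u₁ 0 = 0)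
    (heq₁ : ∀ ρ ∈ Set.Ico (0 : ℝ) 1,
      deriv u₂ ρ - (ρ : ℂ) * deriv u₁ ρ - ((2 / (p - 1) : ℝ) : ℂ) * u₁ ρ
        + ((p * κ : ℝ) : ℂ) * ∫ s in (0:ℝ)..ρ, u₂ s = lam * u₁ ρ)
    (heq₂ : ∀ ρ ∈ Set.Ico (0 : ℝ) 1,
      deriv u₁ ρ - (ρ : ℂ) * deriv u₂ ρ - ((2 / (p - 1) : ℝ) : ℂ) * u₂ ρ = lam * u₂ ρ) :
    (∀ ρ ∈ Set.Ico (0 : ℝ) 1,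
      u₁ ρ = (ρ : ℂ) * u₂ ρ
        + (lam + (((3 - p) / (p - 1) : ℝ) : ℂ)) * ∫ s in (0:ℝ)..ρ, u₂ s) ∧
    (∀ ρ ∈ Set.Ico (0 : ℝ) 1,
      ((1 - ρ ^ 2 : ℝ) : ℂ) *
          deriv (fun σ => deriv (fun σ' => ∫ s in (0:ℝ)..σ', u₂ s) σ) ρ
        - (2 * lam + ((4 / (p - 1) : ℝ) : ℂ)) * (ρ : ℂ) *
          deriv (fun σ' => ∫ s in (0:ℝ)..σ', u₂ s) ρ
        - ((lam + ((2 / (p - 1) : ℝ) : ℂ)) * (lam + (((3 - p) / (p - 1) : ℝ) : ℂ))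
            - ((p * κ : ℝ) : ℂ)) * (∫ s in (0:ℝ)..ρ, u₂ s) = 0) :=
  eigenvalue_equation_reduction_general p κ hp lam u₁ u₂ hreg₁ hreg₂ hu₁0 heq₁ heq₂
end
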